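/- There exist constants c₀ > 0 and c₁ > 0 such that for all positive reals x, y, z with min{x, y, z} > c₀, one has |log(sinh(F₁(x, y, z))) − E(x, y, z)| ≤ c₁. -/

import Mathlib

open Real

/-- Inverse hyperbolic cosine: `Arccosh w = log (w + √(w² − 1))` for `w ≥ 1`. -/
noncomputable def arccosh (w : ℝ) : ℝ := Real.log (w + Real.sqrt (w ^ 2 - 1))

/-- The function `F₁(x,y,z) = Arccosh((cosh z + cosh x · cosh y)/(sinh x · sinh y))`. -/
noncomputable def F₁ (x y z : ℝ) : ℝ :=
  arccosh ((Real.cosh z + Real.cosh x * Real.cosh y) / (Real.sinh x * Real.sinh y))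

/-- The piecewise linear function `E` on the positive octant. -/
noncomputable def E (x y z : ℝ) : ℝ :=
  if x + y ≤ z then z - x - y
  else if |x - y| ≤ z then (z - x - y) / 2
  else -min x y

/-!
Writing `w` for the argument of `Arccosh` in `F₁`, the addition formulas for `cosh` factor
`w² − 1 = (cosh z + cosh (x − y)) (cosh z + cosh (x + y)) / (sinh x sinh y)²`, so
`log sinh F₁ = ½ log (cosh z + cosh (x − y)) + ½ log (cosh z + cosh (x + y))
  − log sinh x − log sinh y`.
Up to bounded errors, `log (cosh a + cosh b)` is `max a b` and `log sinh x` is `x`, and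
`E x y z` is exactly `½ max z |x − y| + ½ max z (x + y) − x − y`.
-/

lemma arccosh_eq_arcosh : arccosh = Real.arcosh := rfl

lemma exp_le_two_mul_cosh (a : ℝ) : exp a ≤ 2 * cosh a := by
  rw [cosh_eq]
  linarith [exp_pos (-a)]

lemma cosh_le_exp {a : ℝ} (ha : 0 ≤ a) : cosh a ≤ exp a := by
  rw [cosh_eq]
  linarith [exp_le_exp.2 (show -a ≤ a by linarith)]

lemma abs_log_cosh_add_cosh_sub_max_le {a b : ℝ} (ha : 0 ≤ a) (hb : 0 ≤ b) :
    |log (cosh a + cosh b) - max a b| ≤ log 2 := by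
  have hpos : 0 < cosh a + cosh b := by positivity
  have hupper : cosh a + cosh b ≤ 2 * exp (max a b) := by
    have := (cosh_le_exp ha).trans (exp_le_exp.2 (le_max_left a b))
    have := (cosh_le_exp hb).trans (exp_le_exp.2 (le_max_right a b))
    linarith
  have hlower : exp (max a b) / 2 ≤ cosh a + cosh b := by
    rcases max_choice a b with h | h <;> rw [h]
    · linarith [exp_le_two_mul_cosh a, cosh_pos b]
    · linarith [exp_le_two_mul_cosh b, cosh_pos a]
  have h₁ := log_le_log hpos hupper
  have h₂ := log_le_log (by positivity) hlower
  rw [log_mul two_ne_zero (exp_ne_zero _), log_exp] at h₁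
  rw [log_div (exp_ne_zero _) two_ne_zero, log_exp] at h₂
  rw [abs_le]
  constructor <;> linarith

lemma abs_log_sinh_sub_le {x : ℝ} (hx : 1 ≤ x) : |log (sinh x) - x| ≤ log 4 := by
  have hsinh : 0 < sinh x := sinh_pos_iff.2 (by linarith)
  have hupper : sinh x ≤ exp x := by
    rw [sinh_eq]
    linarith [exp_pos x, exp_pos (-x)]
  have hlower : exp x / 4 ≤ sinh x := by
    have h2x : 2 ≤ exp (2 * x) := by
      linarith [add_one_le_exp (2 * x)]
    have : exp (-x) * 2 ≤ exp x := by
      calc exp (-x) * 2 ≤ exp (-x) * exp (2 * x) := by gcongr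
        _ = exp x := by rw [← exp_add]; ring_nf
    rw [sinh_eq]
    linarith
  have h₁ := log_le_log hsinh hupper
  have h₂ := log_le_log (by positivity) hlower
  rw [log_exp] at h₁
  rw [log_div (exp_ne_zero _) four_ne_zero, log_exp] at h₂
  rw [abs_le]
  constructor <;> linarith [log_pos (by norm_num : (1 : ℝ) < 4)]

lemma E_eq_max {x y : ℝ} (hx : 0 ≤ x) (hy : 0 ≤ y) (z : ℝ) :
    E x y z = max z |x - y| / 2 + max z (x + y) / 2 - x - y := by
  have habs : |x - y| ≤ x + y := abs_sub_le_iff.2 ⟨by linarith, by linarith⟩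
  unfold E
  split_ifs with hsum hdiff
  · rw [max_eq_left (habs.trans hsum), max_eq_left hsum]; ring
  · rw [max_eq_left hdiff, max_eq_right (not_le.1 hsum).le]; ring
  · rw [max_eq_right (not_le.1 hdiff).le, max_eq_right ((not_le.1 hdiff).le.trans habs)]
    rcases le_total x y with h | h
    · rw [abs_of_nonpos (by linarith), min_eq_left h]; ring
    · rw [abs_of_nonneg (by linarith), min_eq_right h]; ring

lemma F₁_arg_sq_sub_one {x y : ℝ} (hxy : sinh x * sinh y ≠ 0) (z : ℝ) :
    ((cosh z + cosh x * cosh y) / (sinh x * sinh y)) ^ 2 - 1 =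
      (cosh z + cosh (x - y)) * (cosh z + cosh (x + y)) / (sinh x * sinh y) ^ 2 := by
  rw [div_pow, div_sub' (pow_ne_zero 2 hxy), cosh_sub, cosh_add]
  ring

lemma one_le_F₁_arg {x y : ℝ} (hx : 0 < x) (hy : 0 < y) (z : ℝ) :
    1 ≤ (cosh z + cosh x * cosh y) / (sinh x * sinh y) := by
  have hxy : 0 < sinh x * sinh y := mul_pos (sinh_pos_iff.2 hx) (sinh_pos_iff.2 hy)
  rw [one_le_div hxy]
  linarith [cosh_sub x y, one_le_cosh z, one_le_cosh (x - y)]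

lemma log_sinh_F₁ {x y : ℝ} (hx : 0 < x) (hy : 0 < y) (z : ℝ) :
    log (sinh (F₁ x y z)) =
      log (cosh z + cosh (x - y)) / 2 + log (cosh z + cosh (x + y)) / 2
        - log (sinh x) - log (sinh y) := by
  have hsx := sinh_pos_iff.2 hx
  have hsy := sinh_pos_iff.2 hy
  have hA : 0 < cosh z + cosh (x - y) := by positivity
  have hB : 0 < cosh z + cosh (x + y) := by positivity
  rw [F₁, arccosh_eq_arcosh, sinh_arcosh (one_le_F₁_arg hx hy z),
    F₁_arg_sq_sub_one (mul_pos hsx hsy).ne' z, sqrt_div' _ (by positivity),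
    sqrt_sq (mul_pos hsx hsy).le, log_div (by positivity) (mul_pos hsx hsy).ne',
    log_sqrt (mul_pos hA hB).le, log_mul hA.ne' hB.ne', log_mul hsx.ne' hsy.ne']
  ring

/-- Lemma (E:estimate): `log ∘ sinh ∘ F₁` is approximated by `E` up to a bounded error. -/
theorem stmt_6 :
    ∃ c₀ > (0 : ℝ), ∃ c₁ > (0 : ℝ),
      ∀ x y z : ℝ, 0 < x → 0 < y → 0 < z →
        min (min x y) z > c₀ →
        |Real.log (Real.sinh (F₁ x y z)) - E x y z| ≤ c₁ := by
  refine ⟨1, one_pos, log 2 + 2 * log 4, by positivity, ?_⟩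
  intro x y z hx hy hz hmin
  obtain ⟨⟨hx1, hy1⟩, -⟩ : (1 < x ∧ 1 < y) ∧ 1 < z := by
    simpa only [gt_iff_lt, lt_min_iff] using hmin
  have hA := abs_log_cosh_add_cosh_sub_max_le hz.le (abs_nonneg (x - y))
  rw [cosh_abs] at hA
  have hB := abs_log_cosh_add_cosh_sub_max_le hz.le (add_pos hx hy).le
  have hX := abs_log_sinh_sub_le hx1.le
  have hY := abs_log_sinh_sub_le hy1.le
  rw [log_sinh_F₁ hx hy, E_eq_max hx.le hy.le]
  rw [abs_le] at hA hB hX hY ⊢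
  constructor <;> linarith
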